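/- arXiv:2403.18079 — 2 statements merged into one kernel-verified Lean document; each statement's English description precedes it below -/
import Mathlib

section
/- Let Γ be a finite n-player normal-form game and let x ∈ X. For ξ ∈ [0, 1], define the profile w_ξ ∈ X by w_ξ^i = (1 − ξ)·x^i + ξ·Uniform(A^i) for players i ∈ UnSat(x), and w_ξ^i = x^i for players i ∈ Sat(x). Then there exists ξ̄ > 0 such that for every ξ ∈ (0, ξ̄), the profile w_ξ belongs to NoBetter(x); in particular, every player unsatisfied at x remains unsatisfied at w_ξ, and w_ξ^i is fully mixed (assigns positive probability to every action of A^i) for each i ∈ UnSat(x). -/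
open Finset Function

variable {n : ℕ} {A : Fin n → Type*} [∀ i, Fintype (A i)]

/-- `x` is a mixed strategy profile: each component lies in the probability simplex. -/
def IsProfile (x : ∀ i, A i → ℝ) : Prop :=
  ∀ i, x i ∈ stdSimplex ℝ (A i)

/-- Player `i`'s expected reward `R^i(x) = Σ_a r^i(a) ∏_j x^j(a^j)`. -/
noncomputable def expReward (r : Fin n → (∀ i, A i) → ℝ) (i : Fin n)
    (x : ∀ j, A j → ℝ) : ℝ :=
  ∑ a : ∀ j, A j, r i a * ∏ j, x j (a j)

/-- `y` is a best response for player `i` to the strategies `x^{-i}` of the others. -/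
def IsBestResponse (r : Fin n → (∀ i, A i) → ℝ) (i : Fin n)
    (y : A i → ℝ) (x : ∀ j, A j → ℝ) : Prop :=
  y ∈ stdSimplex ℝ (A i) ∧
    ∀ z ∈ stdSimplex ℝ (A i),
      expReward r i (Function.update x i z) ≤ expReward r i (Function.update x i y)

/-- Nash equilibrium: every player best responds. -/
def IsNash (r : Fin n → (∀ i, A i) → ℝ) (x : ∀ j, A j → ℝ) : Prop :=
  ∀ i, IsBestResponse r i (x i) x

-- The pure strategy `δ_a` placing probability 1 on action `a`.
open Classical in
noncomputable def pureStrat (i : Fin n) (a : A i) : A i → ℝ :=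
  fun b => if b = a then 1 else 0

/-- The set of satisfied players at `x`. -/
def Sat (r : Fin n → (∀ i, A i) → ℝ) (x : ∀ j, A j → ℝ) : Set (Fin n) :=
  {i | IsBestResponse r i (x i) x}

/-- The set of unsatisfied players at `x`. -/
def UnSat (r : Fin n → (∀ i, A i) → ℝ) (x : ∀ j, A j → ℝ) : Set (Fin n) :=
  (Sat r x)ᶜ

/-- Profiles accessible from `x`: satisfied players keep their strategies. -/
def Access (r : Fin n → (∀ i, A i) → ℝ) (x : ∀ j, A j → ℝ) :
    Set (∀ j, A j → ℝ) :=
  {y | IsProfile y ∧ ∀ i ∈ Sat r x, y i = x i}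

/-- Accessible profiles at which all previously unsatisfied players remain unsatisfied. -/
def NoBetter (r : Fin n → (∀ i, A i) → ℝ) (x : ∀ j, A j → ℝ) :
    Set (∀ j, A j → ℝ) :=
  {y ∈ Access r x | UnSat r x ⊆ UnSat r y}

/-- Accessible profiles strictly growing the set of unsatisfied players. -/
def Worse (r : Fin n → (∀ i, A i) → ℝ) (x : ∀ j, A j → ℝ) :
    Set (∀ j, A j → ℝ) :=
  {y ∈ NoBetter r x | UnSat r x ⊂ UnSat r y}

-- The profile `w_ξ`: unsatisfied players mix their strategy with the uniform one.
open Classical in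
noncomputable def wProfile (r : Fin n → (∀ i, A i) → ℝ) (x : ∀ j, A j → ℝ)
    (ξ : ℝ) : ∀ i, A i → ℝ :=
  fun i => if IsBestResponse r i (x i) x then x i
    else fun a => (1 - ξ) * x i a + ξ * ((Fintype.card (A i) : ℝ))⁻¹

/-!
A player unsatisfied at `x` has a strictly profitable deviation `z`, and the strict inequality
`R^i(x) < R^i(z, x^{-i})` between continuous functions of the profile persists near `x`. Since
`ξ ↦ w_ξ` is continuous with `w_0 = x`, unsatisfied players stay unsatisfied for small `ξ`; for
`0 < ξ ≤ 1`, `w_ξ` mixes `x^i` with the barycenter of the simplex, so it is a profile that is fully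
mixed for those players.
-/

open Filter Topology

theorem mix_barycenter_mem_stdSimplex {ι : Type*} [Fintype ι] [Nonempty ι] {p : ι → ℝ}
    (hp : p ∈ stdSimplex ℝ ι) {ξ : ℝ} (h0 : 0 ≤ ξ) (h1 : ξ ≤ 1) :
    (fun a => (1 - ξ) * p a + ξ * (Fintype.card ι : ℝ)⁻¹) ∈ stdSimplex ℝ ι :=
  convex_stdSimplex ℝ ι hp (stdSimplex.barycenter (X := ι)).2 (by linarith) h0 (by ring)

section Profiles

variable {n : ℕ} {A : Fin n → Type*} [∀ i, Fintype (A i)]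

theorem continuous_expReward (r : Fin n → (∀ i, A i) → ℝ) (i : Fin n) :
    Continuous (expReward r i) := by
  unfold expReward
  fun_prop

theorem exists_better_of_not_isBestResponse {r : Fin n → (∀ i, A i) → ℝ} {i : Fin n}
    {x : ∀ j, A j → ℝ} (hx : x i ∈ stdSimplex ℝ (A i)) (hi : ¬ IsBestResponse r i (x i) x) :
    ∃ z ∈ stdSimplex ℝ (A i), expReward r i x < expReward r i (update x i z) := by
  by_contra! h
  exact hi ⟨hx, fun z hz => by simpa only [update_eq_self] using h z hz⟩

theorem not_isBestResponse_of_lt {r : Fin n → (∀ i, A i) → ℝ} {i : Fin n}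
    {y : ∀ j, A j → ℝ} {z : A i → ℝ} (hz : z ∈ stdSimplex ℝ (A i))
    (hlt : expReward r i y < expReward r i (update y i z)) :
    ¬ IsBestResponse r i (y i) y := fun h => by
  have := h.2 z hz
  rw [update_eq_self] at this
  linarith

theorem eventually_not_isBestResponse {r : Fin n → (∀ i, A i) → ℝ} {i : Fin n}
    {x : ∀ j, A j → ℝ} (hx : x i ∈ stdSimplex ℝ (A i)) (hi : ¬ IsBestResponse r i (x i) x) :
    ∀ᶠ y in 𝓝 x, ¬ IsBestResponse r i (y i) y := by
  obtain ⟨z, hz, hlt⟩ := exists_better_of_not_isBestResponse hx hi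
  have hcont : Continuous fun y : ∀ j, A j → ℝ =>
      expReward r i (update y i z) - expReward r i y := by
    have := continuous_expReward r i
    fun_prop
  have hpos : ∀ᶠ y in 𝓝 x, 0 < expReward r i (update y i z) - expReward r i y :=
    continuousAt_const.eventually_lt hcont.continuousAt (sub_pos.2 hlt)
  exact hpos.mono fun y hy => not_isBestResponse_of_lt hz (by linarith)

theorem eventually_unSat_subset_unSat (r : Fin n → (∀ i, A i) → ℝ) {x : ∀ j, A j → ℝ}
    (hx : IsProfile x) : ∀ᶠ y in 𝓝 x, UnSat r x ⊆ UnSat r y := by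
  have : ∀ i, ∀ᶠ y in 𝓝 x, i ∈ UnSat r x → i ∈ UnSat r y := fun i => by
    by_cases hi : i ∈ UnSat r x
    · exact (eventually_not_isBestResponse (hx i) hi).mono fun y hy _ => hy
    · exact Eventually.of_forall fun y h => absurd h hi
  exact (eventually_all.2 this).mono fun y hy i => hy i

variable {r : Fin n → (∀ i, A i) → ℝ} {x : ∀ j, A j → ℝ} {i : Fin n}

theorem wProfile_of_mem_sat (hi : i ∈ Sat r x) (ξ : ℝ) : wProfile r x ξ i = x i :=
  if_pos hi

theorem wProfile_of_mem_unSat (hi : i ∈ UnSat r x) (ξ : ℝ) :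
    wProfile r x ξ i = fun a => (1 - ξ) * x i a + ξ * (Fintype.card (A i) : ℝ)⁻¹ :=
  if_neg hi

variable (r x) in
theorem wProfile_zero : wProfile r x 0 = x := by
  funext j
  by_cases hj : j ∈ Sat r x
  · exact wProfile_of_mem_sat hj 0
  · simp [wProfile_of_mem_unSat hj]

variable (r x) in
theorem continuous_wProfile : Continuous (wProfile r x) := by
  refine continuous_pi fun j => ?_
  by_cases hj : j ∈ Sat r x
  · simp only [wProfile_of_mem_sat hj, continuous_const]
  · simp only [wProfile_of_mem_unSat hj]
    fun_prop

theorem isProfile_wProfile [∀ i, Nonempty (A i)] (hx : IsProfile x) {ξ : ℝ} (h0 : 0 ≤ ξ)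
    (h1 : ξ ≤ 1) : IsProfile (wProfile r x ξ) := fun j => by
  by_cases hj : j ∈ Sat r x
  · simpa only [wProfile_of_mem_sat hj] using hx j
  · simpa only [wProfile_of_mem_unSat hj] using mix_barycenter_mem_stdSimplex (hx j) h0 h1

theorem wProfile_pos [∀ i, Nonempty (A i)] (hx : IsProfile x) {ξ : ℝ} (h0 : 0 < ξ)
    (h1 : ξ ≤ 1) (hi : i ∈ UnSat r x) (a : A i) : 0 < wProfile r x ξ i a := by
  rw [wProfile_of_mem_unSat hi]
  have : 0 ≤ (1 - ξ) * x i a := mul_nonneg (by linarith) ((hx i).1 a)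
  have : 0 < ξ * (Fintype.card (A i) : ℝ)⁻¹ := by positivity
  linarith

end Profiles

theorem wProfile_in_noBetter_for_small_xi [∀ i, Nonempty (A i)]
    (r : Fin n → (∀ i, A i) → ℝ) (x : ∀ j, A j → ℝ) (hx : IsProfile x) :
    ∃ ξbar : ℝ, 0 < ξbar ∧ ∀ ξ : ℝ, 0 < ξ → ξ < ξbar →
      wProfile r x ξ ∈ NoBetter r x ∧
      ∀ i ∈ UnSat r x,
        ¬ IsBestResponse r i (wProfile r x ξ i) (wProfile r x ξ) ∧
        ∀ a : A i, 0 < wProfile r x ξ i a := by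
  have hstable : ∀ᶠ ξ in 𝓝 (0 : ℝ), UnSat r x ⊆ UnSat r (wProfile r x ξ) :=
    ((continuous_wProfile r x).tendsto' 0 x (wProfile_zero r x)).eventually
      (eventually_unSat_subset_unSat r hx)
  obtain ⟨ε, hε, hsmall⟩ := 
    Metric.eventually_nhds_iff.1 ((eventually_lt_nhds one_pos).and hstable)
  refine ⟨ε, hε, fun ξ h0 hξ => ?_⟩
  obtain ⟨h1, hsub⟩ := hsmall (by rwa [Real.dist_0_eq_abs, abs_of_pos h0])
  exact ⟨⟨⟨isProfile_wProfile hx h0.le h1.le, fun i hi => wProfile_of_mem_sat hi ξ⟩, hsub⟩,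
    fun i hi => ⟨hsub hi, wProfile_pos hx h0 h1.le hi⟩⟩
end

section
/- Let Γ be a finite n-player normal-form game. For each player j fix mixed strategies p^j, q^j ∈ X^j and for λ ∈ [0, 1] define z^j_λ = (1 − λ)·p^j + λ·q^j. Fix a player i and suppose q^i is fully mixed (q^i(a) > 0 for every a ∈ A^i), so z^i_λ is fully mixed for every λ ∈ (0, 1]. If z^i_λ is a best response to z^{-i}_λ for infinitely many λ ∈ (0, 1], then q^i = z^i_1 is a best response to q^{-i} = z^{-i}_1; in fact, for every λ ∈ [0, 1], every mixed strategy y^i ∈ X^i is a best response to z^{-i}_λ. -/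
open Finset Function

variable {n : ℕ} {A : Fin n → Type*} [∀ i, Fintype (A i)]

/-- The segment of profiles `z_λ = (1 − λ)·p + λ·q`. -/
noncomputable def segProfile (p q : ∀ j, A j → ℝ) (lam : ℝ) : ∀ j, A j → ℝ :=
  fun j b => (1 - lam) * p j b + lam * q j b


section SegmentHelpers

set_option linter.unusedSectionVars false

lemma prod_update_apply' (x : ∀ j, A j → ℝ) (i : Fin n) (w : A i → ℝ) (a : ∀ j, A j) :
    ∏ j, Function.update x i w j (a j) = w (a i) * ∏ j ∈ Finset.univ.erase i, x j (a j) := by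
  rw [← Finset.mul_prod_erase Finset.univ _ (Finset.mem_univ i)]
  congr 1
  · simp
  · exact Finset.prod_congr rfl fun j hj => by
      rw [Function.update_of_ne (Finset.ne_of_mem_erase hj)]

lemma pureStrat_mem' (i : Fin n) (a : A i) : pureStrat i a ∈ stdSimplex ℝ (A i) := by
  constructor
  · intro b; unfold pureStrat; positivity
  · unfold pureStrat
    rw [Finset.sum_eq_single a]
    · simp
    · intro b _ hb; simp [hb]
    · simp

lemma expReward_update_linear' (r : Fin n → (∀ i, A i) → ℝ) (i : Fin n)
    (x : ∀ j, A j → ℝ) (z : A i → ℝ) :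
    expReward r i (Function.update x i z)
      = ∑ b : A i, z b * expReward r i (Function.update x i (pureStrat i b)) := by
  unfold expReward
  simp only [prod_update_apply', pureStrat, Finset.mul_sum]
  rw [Finset.sum_comm]
  refine Finset.sum_congr rfl fun a _ => ?_
  rw [Finset.sum_eq_single (a i)]
  · simp; ring
  · intro b _ hb
    have : ¬ (a i = b) := fun h => hb h.symm
    simp [this]
  · simp

/-- The polynomial in `λ` computing `expReward r i (update (segProfile p q λ) i z)`. -/
noncomputable def segPoly (r : Fin n → (∀ i, A i) → ℝ) (i : Fin n)
    (p q : ∀ j, A j → ℝ) (z : A i → ℝ) : Polynomial ℝ :=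
  ∑ a : ∀ j, A j, Polynomial.C (r i a * z (a i)) *
    ∏ j ∈ Finset.univ.erase i,
      (Polynomial.C (p j (a j)) + Polynomial.C (q j (a j) - p j (a j)) * Polynomial.X)

lemma segPoly_eval (r : Fin n → (∀ i, A i) → ℝ) (i : Fin n)
    (p q : ∀ j, A j → ℝ) (z : A i → ℝ) (lam : ℝ) :
    (segPoly r i p q z).eval lam
      = expReward r i (Function.update (segProfile p q lam) i z) := by
  unfold segPoly expReward
  simp only [Polynomial.eval_finset_sum, Polynomial.eval_mul, Polynomial.eval_C,
    Polynomial.eval_prod, Polynomial.eval_add, Polynomial.eval_X, prod_update_apply']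
  refine Finset.sum_congr rfl fun a _ => ?_
  have h : ∏ j ∈ Finset.univ.erase i, (p j (a j) + (q j (a j) - p j (a j)) * lam)
      = ∏ j ∈ Finset.univ.erase i, segProfile p q lam j (a j) :=
    Finset.prod_congr rfl fun j _ => by simp only [segProfile]; ring
  rw [h]; ring

/-- If a fully-mixed strategy is a best response, every pure strategy attains the same value. -/
lemma pure_payoff_eq_of_full_bestResponse (r : Fin n → (∀ i, A i) → ℝ) (i : Fin n)
    (x : ∀ j, A j → ℝ) (y : A i → ℝ) (hbr : IsBestResponse r i y x)
    (hfull : ∀ a : A i, 0 < y a) (a : A i) :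
    expReward r i (Function.update x i (pureStrat i a))
      = expReward r i (Function.update x i y) := by
  set V := expReward r i (Function.update x i y) with hV
  have hle : ∀ b : A i, expReward r i (Function.update x i (pureStrat i b)) ≤ V :=
    fun b => hbr.2 _ (pureStrat_mem' i b)
  by_contra hne
  have hlt : expReward r i (Function.update x i (pureStrat i a)) < V :=
    lt_of_le_of_ne (hle a) hne
  have hsum : V = ∑ b : A i, y b * expReward r i (Function.update x i (pureStrat i b)) :=
    expReward_update_linear' r i x y
  have hstrict : ∑ b : A i, y b * expReward r i (Function.update x i (pureStrat i b))
      < ∑ b : A i, y b * V := by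
    refine Finset.sum_lt_sum (fun b _ => mul_le_mul_of_nonneg_left (hle b) (hfull b).le)
      ⟨a, Finset.mem_univ a, mul_lt_mul_of_pos_left hlt (hfull a)⟩
  have hsum1 : ∑ b : A i, y b * V = V := by
    rw [← Finset.sum_mul, hbr.1.2, one_mul]
  rw [← hsum, hsum1] at hstrict
  exact lt_irrefl _ hstrict

end SegmentHelpers

theorem bestResponse_along_segment_of_infinitely_many
    (r : Fin n → (∀ i, A i) → ℝ) (i : Fin n)
    (p q : ∀ j, A j → ℝ) (hp : IsProfile p) (hq : IsProfile q)
    (hqfull : ∀ a : A i, 0 < q i a)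
    (hinf : Set.Infinite {lam : ℝ | lam ∈ Set.Ioc (0 : ℝ) 1 ∧
      IsBestResponse r i (segProfile p q lam i) (segProfile p q lam)}) :
    IsBestResponse r i (q i) q ∧
    ∀ lam ∈ Set.Icc (0 : ℝ) 1, ∀ yi ∈ stdSimplex ℝ (A i),
      IsBestResponse r i yi (segProfile p q lam) := by

  classical
  -- A i is nonempty
  have hAne : Nonempty (A i) := by
    by_contra h
    rw [not_nonempty_iff] at h
    have := (hq i).2
    simp [Finset.univ_eq_empty] at this
  obtain ⟨a0⟩ := hAne
  -- abbreviation for pure payoffs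
  set u : A i → ℝ → ℝ := fun a lam =>
    expReward r i (Function.update (segProfile p q lam) i (pureStrat i a)) with hu
  -- On the infinite set, all pure payoffs agree.
  have hkey : ∀ a : A i, ∀ lam : ℝ, u a lam = u a0 lam := by
    intro a
    have hroots : {lam : ℝ | lam ∈ Set.Ioc (0 : ℝ) 1 ∧
        IsBestResponse r i (segProfile p q lam i) (segProfile p q lam)}
        ⊆ {x : ℝ | (segPoly r i p q (pureStrat i a) - segPoly r i p q (pureStrat i a0)).IsRoot x} := by
      intro lam ⟨⟨hl0, hl1⟩, hbr⟩
      have hfull : ∀ b : A i, 0 < segProfile p q lam i b := by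
        intro b
        have h1 : 0 ≤ (1 - lam) * p i b :=
          mul_nonneg (by linarith) ((hp i).1 b)
        have h2 : 0 < lam * q i b := mul_pos hl0 (hqfull b)
        simp only [segProfile]; linarith
      have h1 := pure_payoff_eq_of_full_bestResponse r i (segProfile p q lam)
        (segProfile p q lam i) hbr hfull a
      have h2 := pure_payoff_eq_of_full_bestResponse r i (segProfile p q lam)
        (segProfile p q lam i) hbr hfull a0
      simp only [Set.mem_setOf_eq, Polynomial.IsRoot, Polynomial.eval_sub,
        segPoly_eval]
      rw [h1, h2, sub_self]
    have hzero : segPoly r i p q (pureStrat i a) - segPoly r i p q (pureStrat i a0) = 0 :=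
      Polynomial.eq_zero_of_infinite_isRoot _ (hinf.mono hroots)
    intro lam
    have := congrArg (Polynomial.eval lam) hzero
    simp only [Polynomial.eval_sub, Polynomial.eval_zero, segPoly_eval, sub_eq_zero] at this
    simpa [hu] using this
  -- Any strategy in the simplex has payoff u a0 lam.
  have hval : ∀ lam : ℝ, ∀ z ∈ stdSimplex ℝ (A i),
      expReward r i (Function.update (segProfile p q lam) i z) = u a0 lam := by
    intro lam z hz
    rw [expReward_update_linear']
    have : ∀ b ∈ Finset.univ, z b * expReward r i
        (Function.update (segProfile p q lam) i (pureStrat i b)) = z b * u a0 lam := by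
      intro b _
      rw [show expReward r i (Function.update (segProfile p q lam) i (pureStrat i b))
        = u b lam from rfl, hkey b lam]
    rw [Finset.sum_congr rfl this, ← Finset.sum_mul, hz.2, one_mul]
  have hmain : ∀ lam ∈ Set.Icc (0 : ℝ) 1, ∀ yi ∈ stdSimplex ℝ (A i),
      IsBestResponse r i yi (segProfile p q lam) := by
    intro lam _ yi hyi
    refine ⟨hyi, fun z hz => ?_⟩
    rw [hval lam z hz, hval lam yi hyi]
  refine ⟨?_, hmain⟩
  have hseg1 : segProfile p q 1 = q := by
    funext j b; simp [segProfile]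
  have := hmain 1 (by norm_num) (q i) (hq i)
  rwa [hseg1] at this
end
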